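/- arXiv:2011.00854 — 2 statements merged into one kernel-verified Lean document; each statement's English description precedes it below -/
import Mathlib

section
/- Suppose a sequence Δ_0, Δ_1, …, Δ_k of positive reals satisfies Δ_{i+1} ≤ γ_3 Δ_i for i in a set S_k ⊆ {0,…,k−1} and Δ_{i+1} ≤ γ_2 Δ_i for i in the complement U_k = {0,…,k−1} \ S_k, where 0 < γ_2 < 1 < γ_3. If Δ_k ≥ Δ_min for some Δ_min ∈ (0, Δ_0], then k ≤ |S_k|·(1 + log γ_3 / |log γ_2|) + (1/|log γ_2|)·|log(Δ_min/Δ_0)|. -/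
/-!
Along the iteration Δ shrinks by γ₂ at each of the k - |S| unsuccessful steps and grows by at
most γ₃ at each of the |S| successful ones, so Δmin ≤ Δ_k ≤ γ₃^|S| γ₂^(k-|S|) Δ_0. Taking logarithms,
(k - |S|) |log γ₂| ≤ |S| log γ₃ - log (Δmin / Δ_0), which rearranges to the claimed bound.
-/

open Finset

theorem le_prod_range_mul_of_le_mul {R : Type*} [CommSemiring R] [PartialOrder R]
    [IsOrderedRing R] {f c : ℕ → R} {n : ℕ} (hc : ∀ i < n, 0 ≤ c i)
    (hf : ∀ i < n, f (i + 1) ≤ c i * f i) : f n ≤ (∏ i ∈ range n, c i) * f 0 := by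
  induction n with
  | zero => simp
  | succ n ih =>
    have ih' := ih (fun i hi => hc i (by omega)) (fun i hi => hf i (by omega))
    calc f (n + 1) ≤ c n * f n := hf n n.lt_succ_self
      _ ≤ c n * ((∏ i ∈ range n, c i) * f 0) :=
        mul_le_mul_of_nonneg_left ih' (hc n n.lt_succ_self)
      _ = (∏ i ∈ range (n + 1), c i) * f 0 := by rw [prod_range_succ]; ring

theorem prod_range_ite_mem_eq_pow_mul_pow {M : Type*} [CommMonoid M] {S : Finset ℕ} {k : ℕ}
    (hS : S ⊆ range k) (a b : M) :
    ∏ i ∈ range k, (if i ∈ S then a else b) = a ^ #S * b ^ (k - #S) := by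
  rw [prod_ite, prod_const, prod_const, filter_mem_eq_inter, inter_eq_right.2 hS,
    filter_notMem_eq_sdiff, card_sdiff_of_subset hS, card_range]

theorem Real.log_div_le_of_le_pow_mul_pow_mul {x y a b : ℝ} {s t : ℕ} (hx : 0 < x)
    (ha : 0 < a) (hb : 0 < b) (h : x ≤ a ^ s * b ^ t * y) :
    Real.log (x / y) ≤ s * Real.log a + t * Real.log b := by
  have hy : 0 < y := pos_of_mul_pos_right (hx.trans_le h) (by positivity)
  have hlog := Real.log_le_log hx h
  rw [Real.log_mul (by positivity) hy.ne', Real.log_mul (by positivity) (by positivity),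
    Real.log_pow, Real.log_pow] at hlog
  rw [Real.log_div hx.ne' hy.ne']
  linarith

theorem iteration_count_bound_general (k : ℕ) (Δ : ℕ → ℝ)
    (γ₂ γ₃ : ℝ) (hγ₂0 : 0 < γ₂) (hγ₂1 : γ₂ < 1) (hγ₃ : 1 < γ₃)
    (S : Finset ℕ) (hS : S ⊆ Finset.range k)
    (hsucc : ∀ i ∈ S, Δ (i + 1) ≤ γ₃ * Δ i)
    (hunsucc : ∀ i ∈ Finset.range k \ S, Δ (i + 1) ≤ γ₂ * Δ i)
    (Δmin : ℝ) (hΔmin0 : 0 < Δmin) (hk : Δmin ≤ Δ k) :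
    (k : ℝ) ≤ (S.card : ℝ) * (1 + Real.log γ₃ / |Real.log γ₂|)
      + (1 / |Real.log γ₂|) * |Real.log (Δmin / Δ 0)| := by
  have hγ₃0 : 0 < γ₃ := one_pos.trans hγ₃
  have hΔk : Δ k ≤ γ₃ ^ #S * γ₂ ^ (k - #S) * Δ 0 := by
    rw [← prod_range_ite_mem_eq_pow_mul_pow hS]
    refine le_prod_range_mul_of_le_mul (fun i _ => by split_ifs <;> positivity) fun i hi => ?_
    split_ifs with hiS
    · exact hsucc i hiS
    · exact hunsucc i (mem_sdiff.2 ⟨mem_range.2 hi, hiS⟩)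
  have hlog := Real.log_div_le_of_le_pow_mul_pow_mul hΔmin0 hγ₃0 hγ₂0 (hk.trans hΔk)
  have hSk : #S ≤ k := by simpa using card_le_card hS
  rw [Nat.cast_sub hSk] at hlog
  have hγ₂log : Real.log γ₂ < 0 := Real.log_neg hγ₂0 hγ₂1
  have hsteps : (k : ℝ) - #S ≤ (#S * Real.log γ₃ + |Real.log (Δmin / Δ 0)|) / -Real.log γ₂ := by
    rw [le_div_iff₀ (neg_pos.2 hγ₂log)]
    linarith [neg_abs_le (Real.log (Δmin / Δ 0))]
  rw [abs_of_neg hγ₂log]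
  calc (k : ℝ) ≤ #S + (#S * Real.log γ₃ + |Real.log (Δmin / Δ 0)|) / -Real.log γ₂ := by
        linarith
    _ = _ := by ring

theorem iteration_count_bound (k : ℕ) (Δ : ℕ → ℝ) (hΔpos : ∀ i ≤ k, 0 < Δ i)
    (γ₂ γ₃ : ℝ) (hγ₂0 : 0 < γ₂) (hγ₂1 : γ₂ < 1) (hγ₃ : 1 < γ₃)
    (S : Finset ℕ) (hS : S ⊆ Finset.range k)
    (hsucc : ∀ i ∈ S, Δ (i + 1) ≤ γ₃ * Δ i)
    (hunsucc : ∀ i ∈ Finset.range k \ S, Δ (i + 1) ≤ γ₂ * Δ i)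
    (Δmin : ℝ) (hΔmin0 : 0 < Δmin) (hΔmin : Δmin ≤ Δ 0) (hk : Δmin ≤ Δ k) :
    (k : ℝ) ≤ (S.card : ℝ) * (1 + Real.log γ₃ / |Real.log γ₂|)
      + (1 / |Real.log γ₂|) * |Real.log (Δmin / Δ 0)| :=
  iteration_count_bound_general k Δ γ₂ γ₃ hγ₂0 hγ₂1 hγ₃ S hS hsucc hunsucc Δmin hΔmin0 hk
end

section
/- Suppose for each ℓ ∈ {1,…,j} the ℓ-th derivative approximation error satisfies ‖∇̄^ℓ f(x) − ∇^ℓ f(x)‖ ≤ (ω/(3‖s‖^ℓ))·ΔT̄_{f,j}(x,s), where ΔT̄_{f,j}(x,s) > 0, ω ∈ (0,1), and 0 < ‖s‖. Then |ΔT̄_{f,j}(x,s) − ΔT_{f,j}(x,s)| ≤ (1/3)(Σ_{ℓ=1}^j 1/ℓ!)·ω·ΔT̄_{f,j}(x,s) < ω·ΔT̄_{f,j}(x,s). -/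
open Finset

theorem sum_Icc_one_div_factorial_le_two (j : ℕ) :
    ∑ ℓ ∈ Icc 1 j, 1 / (ℓ.factorial : ℝ) ≤ 2 := by
  have hIcc : Icc 1 j = {ℓ ∈ range (j + 1) | 1 ≤ ℓ} := by
    ext ℓ
    simp [and_comm]
  simpa [hIcc] using Complex.sum_div_factorial_le (α := ℝ) 1 (j + 1) one_pos

section TaylorDecrement

variable {E : Type*} [SeminormedAddCommGroup E] [NormedSpace ℝ E]

theorem abs_apply_const_sub_le {ℓ : ℕ} (A B : ContinuousMultilinearMap ℝ (fun _ : Fin ℓ => E) ℝ)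
    (s : E) : |B (fun _ => s) - A (fun _ => s)| ≤ ‖B - A‖ * ‖s‖ ^ ℓ := by
  simpa [Real.norm_eq_abs] using (B - A).le_opNorm fun _ => s

/-- The decrease `ΔT_{f,j}(x, s)` of the order-`j` Taylor model whose derivatives at `x` are
`A 1, …, A j`. -/
noncomputable def taylorDecrement
    (A : (ℓ : ℕ) → ContinuousMultilinearMap ℝ (fun _ : Fin ℓ => E) ℝ) (s : E) (j : ℕ) : ℝ :=
  -∑ ℓ ∈ Icc 1 j, (1 / (ℓ.factorial : ℝ)) * A ℓ (fun _ => s)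

theorem abs_taylorDecrement_sub_le
    (A B : (ℓ : ℕ) → ContinuousMultilinearMap ℝ (fun _ : Fin ℓ => E) ℝ) (s : E) (j : ℕ) :
    |taylorDecrement B s j - taylorDecrement A s j| ≤
      ∑ ℓ ∈ Icc 1 j, ‖B ℓ - A ℓ‖ * ‖s‖ ^ ℓ / ℓ.factorial := by
  have hdiff : taylorDecrement B s j - taylorDecrement A s j =
      ∑ ℓ ∈ Icc 1 j, -((B ℓ (fun _ => s) - A ℓ (fun _ => s)) / ℓ.factorial) := by
    rw [taylorDecrement, taylorDecrement, neg_sub_neg, ← sum_sub_distrib]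
    exact sum_congr rfl fun ℓ _ => by ring
  rw [hdiff]
  refine (abs_sum_le_sum_abs _ _).trans (sum_le_sum fun ℓ _ => ?_)
  rw [abs_neg, abs_div, Nat.abs_cast]
  gcongr
  exact abs_apply_const_sub_le (A ℓ) (B ℓ) s

end TaylorDecrement

theorem derivativewise_accuracy_bound_general (n j : ℕ)
    (A B : (ℓ : ℕ) → ContinuousMultilinearMap ℝ (fun _ : Fin ℓ => EuclideanSpace ℝ (Fin n)) ℝ)
    (s : EuclideanSpace ℝ (Fin n)) (hs : 0 < ‖s‖)
    (ω : ℝ) (hω0 : 0 < ω)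
    (ΔT ΔTb : ℝ)
    (hΔT : ΔT = -∑ ℓ ∈ Finset.Icc 1 j, (1 / (Nat.factorial ℓ : ℝ)) * A ℓ (fun _ => s))
    (hΔTb : ΔTb = -∑ ℓ ∈ Finset.Icc 1 j, (1 / (Nat.factorial ℓ : ℝ)) * B ℓ (fun _ => s))
    (hΔTbpos : 0 < ΔTb)
    (herr : ∀ ℓ ∈ Finset.Icc 1 j, ‖B ℓ - A ℓ‖ ≤ (ω / (3 * ‖s‖ ^ ℓ)) * ΔTb) :
    |ΔTb - ΔT| ≤ (1 / 3) * (∑ ℓ ∈ Finset.Icc 1 j, 1 / (Nat.factorial ℓ : ℝ)) * ω * ΔTb ∧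
    (1 / 3) * (∑ ℓ ∈ Finset.Icc 1 j, 1 / (Nat.factorial ℓ : ℝ)) * ω * ΔTb < ω * ΔTb := by
  have hterm : ∀ ℓ ∈ Icc 1 j, ‖B ℓ - A ℓ‖ * ‖s‖ ^ ℓ ≤ ω * ΔTb / 3 := fun ℓ hℓ => by
    have h := herr ℓ hℓ
    rw [show ω / (3 * ‖s‖ ^ ℓ) * ΔTb = ω * ΔTb / 3 / ‖s‖ ^ ℓ by field_simp,
      le_div_iff₀ (by positivity)] at h
    exact h
  constructor
  · calc |ΔTb - ΔT|
        ≤ ∑ ℓ ∈ Icc 1 j, ‖B ℓ - A ℓ‖ * ‖s‖ ^ ℓ / ℓ.factorial :=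
          hΔT ▸ hΔTb ▸ abs_taylorDecrement_sub_le A B s j
      _ ≤ ∑ ℓ ∈ Icc 1 j, ω * ΔTb / 3 / ℓ.factorial :=
          sum_le_sum fun ℓ hℓ => by gcongr; exact hterm ℓ hℓ
      _ = (1 / 3) * (∑ ℓ ∈ Icc 1 j, 1 / (ℓ.factorial : ℝ)) * ω * ΔTb := by
          rw [mul_sum, sum_mul, sum_mul]
          exact sum_congr rfl fun ℓ _ => by ring
  · have hsum := sum_Icc_one_div_factorial_le_two j
    nlinarith [mul_pos hω0 hΔTbpos]

theorem derivativewise_accuracy_bound (n j : ℕ) (hj : 1 ≤ j)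
    (A B : (ℓ : ℕ) → ContinuousMultilinearMap ℝ (fun _ : Fin ℓ => EuclideanSpace ℝ (Fin n)) ℝ)
    (s : EuclideanSpace ℝ (Fin n)) (hs : 0 < ‖s‖)
    (ω : ℝ) (hω0 : 0 < ω) (hω1 : ω < 1)
    (ΔT ΔTb : ℝ)
    (hΔT : ΔT = -∑ ℓ ∈ Finset.Icc 1 j, (1 / (Nat.factorial ℓ : ℝ)) * A ℓ (fun _ => s))
    (hΔTb : ΔTb = -∑ ℓ ∈ Finset.Icc 1 j, (1 / (Nat.factorial ℓ : ℝ)) * B ℓ (fun _ => s))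
    (hΔTbpos : 0 < ΔTb)
    (herr : ∀ ℓ ∈ Finset.Icc 1 j, ‖B ℓ - A ℓ‖ ≤ (ω / (3 * ‖s‖ ^ ℓ)) * ΔTb) :
    |ΔTb - ΔT| ≤ (1 / 3) * (∑ ℓ ∈ Finset.Icc 1 j, 1 / (Nat.factorial ℓ : ℝ)) * ω * ΔTb ∧
    (1 / 3) * (∑ ℓ ∈ Finset.Icc 1 j, 1 / (Nat.factorial ℓ : ℝ)) * ω * ΔTb < ω * ΔTb :=
  derivativewise_accuracy_bound_general n j A B s hs ω hω0 ΔT ΔTb hΔT hΔTb hΔTbpos herr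
end
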